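/- arXiv:1706.05436 — 5 statements merged into one kernel-verified Lean document; each statement's English description precedes it below -/
import Mathlib

section
/- For integers k, d, n with d < n, consider the n×k binary matrix M where the nonzero entries of column j (for j = 0,...,k-1) are exactly in rows {jd, jd+1, ..., (j+1)d-1} reduced modulo n. Then the weight of row i equals ⌈kd/n⌉ if i ∈ {0, ..., (kd-1) mod n} and equals ⌊kd/n⌋ if i ∈ {(kd) mod n, ..., n-1}. -/
/-- Row weights of the cyclic mask matrix. `M r j = 1` iff
`r ≡ i + j*d (mod n)` for some `0 ≤ i ≤ d-1`.  The weight of row `i` is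
`⌈kd/n⌉` for `i ∈ {0, …, (kd-1) mod n}` and `⌊kd/n⌋` for
`i ∈ {(kd) mod n, …, n-1}`. -/
theorem stmt0 (n k d : ℕ) (hk : 0 < k) (hd : 0 < d) (hdn : d < n)
    (M : Fin n → Fin k → Bool)
    (hM : ∀ (r : Fin n) (j : Fin k),
      M r j = true ↔ ∃ i : ℕ, i < d ∧ (r : ℕ) % n = (i + (j : ℕ) * d) % n)
    (rowWeight : Fin n → ℕ)
    (hrw : ∀ r : Fin n, rowWeight r = (Finset.univ.filter fun j : Fin k => M r j = true).card) :
    ∀ r : Fin n,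
      ((r : ℕ) ≤ (k * d - 1) % n → rowWeight r = (k * d + n - 1) / n) ∧
      ((k * d) % n ≤ (r : ℕ) → rowWeight r = k * d / n) := by
  have hn : 0 < n := hd.trans hdn
  intro r
  have hrn : (r : ℕ) < n := r.isLt
  -- Step 1: rowWeight r counts x < k*d with x % n = r
  have hmap : ∀ x ∈ (Finset.range (k*d)).filter (fun x => x % n = (r:ℕ)), x / d < k := by
    intro x hx
    simp only [Finset.mem_filter, Finset.mem_range] at hx
    exact Nat.div_lt_of_lt_mul (by rw [mul_comm]; exact hx.1)
  have key : rowWeight r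
      = ((Finset.range (k*d)).filter (fun x => x % n = (r:ℕ))).card := by
    rw [hrw]
    refine (Finset.card_bij (fun x hx => (⟨x / d, hmap x hx⟩ : Fin k)) ?_ ?_ ?_).symm
    · intro x hx
      have hx' := hx
      simp only [Finset.mem_filter, Finset.mem_range] at hx'
      simp only [Finset.mem_filter, Finset.mem_univ, true_and]
      rw [hM]
      refine ⟨x % d, Nat.mod_lt x hd, ?_⟩
      show (r:ℕ) % n = (x % d + x / d * d) % n
      rw [Nat.mod_eq_of_lt hrn, Nat.mod_add_div' x d]
      exact hx'.2.symm
    · intro x₁ hx₁ x₂ hx₂ hxe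
      simp only [Finset.mem_filter, Finset.mem_range] at hx₁ hx₂
      have hq : x₁ / d = x₂ / d := by simpa [Fin.mk.injEq] using hxe
      have hmod : x₁ % n = x₂ % n := by rw [hx₁.2, hx₂.2]
      have d1 := Nat.div_add_mod x₁ d
      have d2 := Nat.div_add_mod x₂ d
      have m1 := Nat.mod_lt x₁ hd
      have m2 := Nat.mod_lt x₂ hd
      rw [hq] at d1
      rcases le_total x₁ x₂ with hle | hle
      · have hdvd : n ∣ x₂ - x₁ := (Nat.modEq_iff_dvd' hle).mp hmod
        have hlt : x₂ - x₁ < n := by omega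
        have h0 := Nat.eq_zero_of_dvd_of_lt hdvd hlt
        omega
      · have hdvd : n ∣ x₁ - x₂ := (Nat.modEq_iff_dvd' hle).mp hmod.symm
        have hlt : x₁ - x₂ < n := by omega
        have h0 := Nat.eq_zero_of_dvd_of_lt hdvd hlt
        omega
    · intro b hb
      simp only [Finset.mem_filter, Finset.mem_univ, true_and] at hb
      rw [hM] at hb
      obtain ⟨i, hi, hbi⟩ := hb
      have hbk : (b:ℕ) < k := b.isLt
      refine ⟨i + (b:ℕ) * d, ?_, ?_⟩
      · simp only [Finset.mem_filter, Finset.mem_range]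
        constructor
        · have h1 : ((b:ℕ) + 1) * d ≤ k * d := Nat.mul_le_mul_right d hbk
          rw [add_mul, one_mul] at h1
          omega
        · rw [Nat.mod_eq_of_lt hrn] at hbi
          exact hbi.symm
      · apply Fin.ext
        show (i + (b:ℕ)*d)/d = (b:ℕ)
        rw [Nat.add_mul_div_right _ _ hd, Nat.div_eq_of_lt hi, zero_add]
  -- Step 2: count formula
  have hcount : ((Finset.range (k*d)).filter (fun x => x % n = (r:ℕ))).card
      = k*d/n + if (r:ℕ) < (k*d) % n then 1 else 0 := by
    have h := Nat.count_modEq_card (k*d) hn (r:ℕ)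
    rw [Nat.count_eq_card_filter_range, Nat.mod_eq_of_lt hrn] at h
    rw [← h]
    congr 1
    ext x
    simp [Nat.ModEq, Nat.mod_eq_of_lt hrn]
  -- Step 3: arithmetic
  set N := k * d with hNdef
  have hN1 : 1 ≤ N := Nat.mul_pos hk hd
  obtain ⟨q, hq⟩ : ∃ q, N / n = q := ⟨_, rfl⟩
  obtain ⟨m, hm⟩ : ∃ m, N % n = m := ⟨_, rfl⟩
  rw [hq, hm] at hcount
  rw [hq, hm]
  have hmlt : m < n := hm ▸ Nat.mod_lt _ hn
  have hNe : N = q * n + m := by rw [← hq, ← hm, Nat.div_add_mod' N n]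
  have hA : (N + n - 1) / n = q + if m = 0 then 0 else 1 := by
    by_cases hm0 : m = 0
    · have e : N + n - 1 = (n - 1) + q * n := by omega
      rw [e, Nat.add_mul_div_right _ _ hn, Nat.div_eq_of_lt (by omega : n - 1 < n)]
      simp [hm0]
    · have e : N + n - 1 = (m - 1) + (q + 1) * n := by rw [add_mul, one_mul]; omega
      rw [e, Nat.add_mul_div_right _ _ hn, Nat.div_eq_of_lt (by omega : m - 1 < n)]
      simp [hm0]
  have hB : (N - 1) % n = if m = 0 then n - 1 else m - 1 := by
    by_cases hm0 : m = 0
    · have hq0 : q ≠ 0 := by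
        rintro rfl
        rw [zero_mul] at hNe
        omega
      obtain ⟨q', rfl⟩ := Nat.exists_eq_succ_of_ne_zero hq0
      have e : N - 1 = (n - 1) + q' * n := by
        rw [Nat.succ_mul] at hNe
        omega
      rw [e, Nat.add_mul_mod_self_right, Nat.mod_eq_of_lt (by omega : n - 1 < n)]
      simp [hm0]
    · have e : N - 1 = (m - 1) + q * n := by omega
      rw [e, Nat.add_mul_mod_self_right, Nat.mod_eq_of_lt (by omega : m - 1 < n)]
      simp [hm0]
  constructor
  · intro h
    rw [key, hcount, hA]
    rw [hB] at h
    by_cases hm0 : m = 0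
    · simp [hm0]
    · have hrm : (r:ℕ) < m := by rw [if_neg hm0] at h; omega
      simp [hm0, hrm]
  · intro h
    rw [key, hcount]
    have : ¬ ((r:ℕ) < m) := by omega
    simp [this]
end

section
/- Let n, k, w be positive integers with w ≤ k, and set k_h = (nw) mod k, k_l = k - k_h, d_l = ⌊nw/k⌋, d_h = ⌈nw/k⌉. Then ⌊k_h d_h / n⌋ + ⌈k_l d_l / n⌉ = ⌈k_h d_h / n⌉ + ⌊k_l d_l / n⌋ = w. -/
private lemma ceil_div_add (n b : ℕ) (hn : 0 < n) (hb : 0 < b % n) :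
    (b + n - 1) / n = b / n + 1 := by
  have hbpos : 0 < b := Nat.pos_of_ne_zero (by rintro rfl; simp at hb)
  have h1 : b + n - 1 = b + (n - 1) := by omega
  rw [h1, Nat.add_div hn, Nat.div_eq_of_lt (show n - 1 < n by omega),
    Nat.mod_eq_of_lt (show n - 1 < n by omega)]
  have : n ≤ b % n + (n - 1) := by omega
  simp [this]

private lemma aux (n w a b : ℕ) (hn : 0 < n) (h : a + b = n * w) :
    a / n + (b + n - 1) / n = w := by
  rcases Nat.eq_zero_or_pos (b % n) with hb | hb
  · -- n ∣ b, hence n ∣ a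
    obtain ⟨m, rfl⟩ := Nat.dvd_of_mod_eq_zero hb
    have hm : m ≤ w := Nat.le_of_mul_le_mul_left (by omega) hn
    have ha : a = n * (w - m) := by
      have h2 : n * (w - m) + n * m = n * w := by
        rw [← Nat.mul_add]; congr 1; omega
      omega
    have h3 : (n * m + n - 1) = n * m + (n - 1) := by omega
    rw [ha, Nat.mul_div_cancel_left _ hn, h3, Nat.mul_add_div hn,
      Nat.div_eq_of_lt (by omega)]
    omega
  · rw [ceil_div_add n b hn hb]
    have ha := Nat.div_add_mod a n
    have hb' := Nat.div_add_mod b n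
    have hra : a % n < n := Nat.mod_lt _ hn
    have hrb : b % n < n := Nat.mod_lt _ hn
    have hmod : (a % n + b % n) % n = 0 := by
      have : (a + b) % n = 0 := by rw [h]; exact Nat.mul_mod_right n w
      rwa [Nat.add_mod] at this
    have hsum : a % n + b % n = n := by
      rcases lt_or_ge (a % n + b % n) n with h' | h'
      · rw [Nat.mod_eq_of_lt h'] at hmod; omega
      · have h2 : (a % n + b % n) % n = a % n + b % n - n := by
          rw [Nat.mod_eq_sub_mod h', Nat.mod_eq_of_lt (by omega)]
        omega
    have key : n * (a / n + (b / n + 1)) = n * w := by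
      have : n * (a / n) + n * (b / n) + n = n * w := by omega
      linarith [Nat.mul_add n (a / n) (b / n + 1), Nat.mul_add n (b / n) 1]
    exact Nat.eq_of_mul_eq_mul_left hn key

/-- With `k_h = (nw) mod k`, `k_l = k - k_h`, `d_l = ⌊nw/k⌋`,
`d_h = ⌈nw/k⌉`, we have
`⌊k_h d_h / n⌋ + ⌈k_l d_l / n⌉ = ⌈k_h d_h / n⌉ + ⌊k_l d_l / n⌋ = w`. -/
theorem stmt1 (n k w : ℕ) (hn : 0 < n) (hk : 0 < k) (hw : 0 < w) (hwk : w ≤ k)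
    (kh kl dl dh : ℕ)
    (hkh : kh = (n * w) % k) (hkl : kl = k - kh)
    (hdl : dl = n * w / k) (hdh : dh = (n * w + k - 1) / k) :
    (kh * dh) / n + (kl * dl + n - 1) / n = w ∧
    (kh * dh + n - 1) / n + (kl * dl) / n = w := by
  have hdm := Nat.div_add_mod (n * w) k
  have hmain : kh * dh + kl * dl = n * w := by
    rcases Nat.eq_zero_or_pos ((n * w) % k) with h0 | h0
    · have hdvd : k ∣ n * w := Nat.dvd_of_mod_eq_zero h0
      have : k * (n * w / k) = n * w := Nat.mul_div_cancel' hdvd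
      subst hkh hkl hdl; simp [h0]; omega
    · have hdh' : dh = dl + 1 := by
        rw [hdh, hdl, ceil_div_add k (n * w) hk h0]
      have hkhlt : kh < k := by rw [hkh]; exact Nat.mod_lt _ hk
      have hexp : kl * dl = k * dl - kh * dl := by
        rw [hkl, Nat.sub_mul]
      have hle : kh * dl ≤ k * dl := Nat.mul_le_mul_right dl (le_of_lt hkhlt)
      have hkdl : k * dl = n * w - kh := by rw [hdl, hkh]; omega
      rw [hdh', Nat.mul_add, Nat.mul_one, hexp, hkdl]
      have : kh * dl ≤ n * w - kh := by rw [← hkdl]; exact hle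
      omega
  constructor
  · exact aux n w (kh * dh) (kl * dl) hn hmain
  · have := aux n w (kl * dl) (kh * dh) hn (by omega)
    omega
end

section
/- Let α be a primitive n-th root of unity in ℂ, and let F = {i₁, ..., i_f} ⊆ {0, ..., n-1} be a set of f distinct indices. Define the f×f Vandermonde matrix G_F with entries (G_F)_{l,m} = α^{i_l · m} for m = 0, ..., f-1. Then G_F is invertible, and the l-th entry of the first row of its inverse equals ∏_{j ≠ l} (1 - α^{i_l - i_j})^{-1}. -/
open Finset

/-- For a primitive `n`-th root of unity `α` and distinct indices
`i₁,…,i_f ⊆ {0,…,n-1}`, the Vandermonde matrix `G_F` with entries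
`(G_F)_{l,m} = α^(i_l m)` is invertible and the `l`-th entry of the first row
of its inverse equals `∏_{j ≠ l} (1 - α^(i_l - i_j))⁻¹`. -/
theorem stmt3 (n f : ℕ) (hn : 0 < n) (hf : 0 < f) (α : ℂ)
    (hα : IsPrimitiveRoot α n)
    (ι : Fin f → Fin n) (hι : Function.Injective ι)
    (G : Matrix (Fin f) (Fin f) ℂ)
    (hG : ∀ l m : Fin f, G l m = α ^ ((ι l : ℕ) * (m : ℕ))) :
    IsUnit G ∧
    ∀ l : Fin f, G⁻¹ ⟨0, hf⟩ l = ∏ j ∈ univ.erase l,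
      (1 - α ^ (((ι l : ℕ) : ℤ) - ((ι j : ℕ) : ℤ)))⁻¹ := by
  have hα0 : α ≠ 0 := hα.ne_zero hn.ne'
  set v : Fin f → ℂ := fun l => α ^ (ι l : ℕ) with hv
  have hvinj : Function.Injective v := by
    intro a b hab
    exact hι (Fin.val_injective (hα.pow_inj (ι a).isLt (ι b).isLt hab))
  have hGv : G = Matrix.vandermonde v := by
    ext l m
    rw [hG l m, Matrix.vandermonde, Matrix.of_apply, hv, pow_mul]
  have hdet : G.det ≠ 0 := by
    rw [hGv]
    exact Matrix.det_vandermonde_ne_zero_iff.mpr hvinj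
  have hunit : IsUnit G := (Matrix.isUnit_iff_isUnit_det G).mpr (Ne.isUnit hdet)
  refine ⟨hunit, fun l => ?_⟩
  -- the candidate row
  set a : Fin f → ℂ := fun l => ∏ j ∈ univ.erase l, (v j / (v j - v l)) with ha
  -- a is the value at 0 of the Lagrange basis polynomial
  have hbasis : ∀ l : Fin f, (Lagrange.basis univ v l).eval 0 = a l := by
    intro l
    rw [Lagrange.basis, Polynomial.eval_prod, ha]
    refine Finset.prod_congr rfl fun j hj => ?_
    rw [Lagrange.basisDivisor, Polynomial.eval_mul, Polynomial.eval_C,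
      Polynomial.eval_sub, Polynomial.eval_X, Polynomial.eval_C]
    have hne : v j - v l ≠ 0 := sub_ne_zero_of_ne (fun h =>
      (Finset.mem_erase.mp hj).1 (hvinj h))
    rw [zero_sub, ← neg_sub (v j) (v l), inv_neg, neg_mul_neg, div_eq_mul_inv, mul_comm]
  -- key identity: a ᵥ* G = e₁
  have key : ∀ m : Fin f, ∑ k, a k * v k ^ (m : ℕ) = if (m : ℕ) = 0 then 1 else 0 := by
    intro m
    have hdeg : (Polynomial.X ^ (m : ℕ) : Polynomial ℂ).degree < (univ : Finset (Fin f)).card := by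
      rw [Polynomial.degree_X_pow, Finset.card_univ, Fintype.card_fin]
      exact_mod_cast m.isLt
    have := Lagrange.eq_interpolate (f := (Polynomial.X ^ (m : ℕ) : Polynomial ℂ))
      (Set.injOn_of_injective hvinj) hdeg
    have h0 := congrArg (Polynomial.eval 0) this
    rw [Lagrange.interpolate_apply, Polynomial.eval_finset_sum] at h0
    simp only [Polynomial.eval_mul, Polynomial.eval_C, Polynomial.eval_pow,
      Polynomial.eval_X] at h0
    rw [zero_pow_eq] at h0
    rw [h0]
    refine Finset.sum_congr rfl fun k _ => ?_
    rw [hbasis k]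
    ring
  -- conclude G⁻¹ first row equals a
  have hrow : G⁻¹ ⟨0, hf⟩ l = a l := by
    have hGG : G * G⁻¹ = 1 := Matrix.mul_nonsing_inv G (Ne.isUnit hdet)
    have h1 : ∀ m, (Matrix.vecMul a G) m = if (m : ℕ) = 0 then 1 else 0 := by
      intro m
      rw [Matrix.vecMul, dotProduct]
      rw [← key m]
      refine Finset.sum_congr rfl fun k _ => ?_
      rw [hG k m, pow_mul]
    have h2 : Matrix.vecMul (Matrix.vecMul a G) G⁻¹ = a := by
      rw [Matrix.vecMul_vecMul, hGG, Matrix.vecMul_one]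
    have h3 := congrFun h2 l
    rw [Matrix.vecMul, dotProduct] at h3
    simp only [h1] at h3
    rw [← h3, Finset.sum_eq_single (⟨0, hf⟩ : Fin f)]
    · simp
    · intro b _ hb
      have hb' : (b : ℕ) ≠ 0 := fun h => hb (Fin.ext h)
      simp [hb']
    · simp
  rw [hrow, ha]
  refine Finset.prod_congr rfl fun j hj => ?_
  have hne : v j - v l ≠ 0 := sub_ne_zero_of_ne (fun h =>
    (Finset.mem_erase.mp hj).1 (hvinj h))
  have hvj : v j ≠ 0 := pow_ne_zero _ hα0
  have hz : α ^ (((ι l : ℕ) : ℤ) - ((ι j : ℕ) : ℤ)) = v l / v j := by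
    rw [zpow_sub₀ hα0, zpow_natCast, zpow_natCast]
  rw [hz]
  have hd : 1 - v l / v j = (v j - v l) / v j := by
    field_simp
  rw [hd, inv_div]
end

section
/- Let α be a primitive n-th root of unity, and let B ∈ ℂ^{n×k} be the encoding matrix whose j-th column is the evaluation vector (t_j(1), t_j(α), ..., t_j(α^{n-1})) of a polynomial t_j of degree at most f-1 with constant term t_j(0) = 1. Then for every subset F ⊆ {0,...,n-1} with |F| = f, there exists a vector a_F ∈ ℂ^f such that a_F^T B_F = (1, 1, ..., 1) (the all-ones row vector of length k), where B_F is the submatrix of B with rows indexed by F. -/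
open Finset Polynomial

/-- If `B ∈ ℂ^{n×k}` has `j`-th column the evaluations of a
polynomial `t_j` of degree at most `f-1` with `t_j(0) = 1` at the powers of a
primitive `n`-th root of unity `α`, then for every `F ⊆ {0,…,n-1}` with
`|F| = f` there is a vector `a_F` with `a_Fᵀ B_F = (1,…,1)`. -/
theorem stmt6 (n k f : ℕ) (hn : 0 < n) (hf : 0 < f) (hfn : f ≤ n) (α : ℂ)
    (hα : IsPrimitiveRoot α n)
    (t : Fin k → Polynomial ℂ)
    (hdeg : ∀ j, (t j).degree < (f : ℕ))
    (hconst : ∀ j, (t j).coeff 0 = 1)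
    (B : Matrix (Fin n) (Fin k) ℂ)
    (hB : ∀ (i : Fin n) (j : Fin k), B i j = (t j).eval (α ^ (i : ℕ))) :
    ∀ F : Finset (Fin n), F.card = f →
      ∃ a : Fin n → ℂ, ∀ j : Fin k, ∑ i ∈ F, a i * B i j = 1 := by
  intro F hF
  set v : Fin n → ℂ := fun i => α ^ (i : ℕ) with hv
  have hinj : Set.InjOn v F := by
    intro i _ j _ hij
    exact Fin.ext (hα.pow_inj i.isLt j.isLt hij)
  refine ⟨fun i => (Lagrange.basis F v i).eval 0, fun j => ?_⟩
  have h1 : t j = Lagrange.interpolate F v fun i => (t j).eval (v i) :=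
    Lagrange.eq_interpolate hinj (by rw [hF]; exact hdeg j)
  have h2 := congrArg (Polynomial.eval 0) h1
  rw [Lagrange.interpolate_apply, Polynomial.eval_finset_sum] at h2
  have h0 : (t j).eval 0 = 1 := by
    rw [← Polynomial.coeff_zero_eq_eval_zero]; exact hconst j
  rw [h0] at h2
  rw [h2]
  refine Finset.sum_congr rfl fun i hi => ?_
  simp only
  rw [hB i j, Polynomial.eval_mul, Polynomial.eval_C]
  ring
end

section
/- In the gradient coding setup with n workers, k data partitions, and each worker assigned w partitions, suppose a binary assignment matrix M ∈ {0,1}^{n×k} with row weight w has the property that for every subset F of rows of size f = n - s, every column of M restricted to F is nonzero (equivalently, the scheme can tolerate any s stragglers). Then s ≤ ⌊wn/k⌋ - 1. -/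
open Finset

/-- If the assignment matrix `M ∈ {0,1}^{n×k}` has row weight `w`
and the scheme tolerates any `s` stragglers (every column restricted to any
`n - s` rows is nonzero), then `s ≤ ⌊wn/k⌋ - 1`. -/
theorem stmt7 (n k w s : ℕ) (hn : 0 < n) (hk : 0 < k) (hs : s ≤ n)
    (M : Fin n → Fin k → Bool)
    (hrow : ∀ i : Fin n, (univ.filter fun j : Fin k => M i j = true).card = w)
    (htol : ∀ F : Finset (Fin n), F.card = n - s →
      ∀ j : Fin k, ∃ i ∈ F, M i j = true) :
    s ≤ w * n / k - 1 := by
  -- every column has weight ≥ s + 1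
  have hcol : ∀ j : Fin k, s + 1 ≤ (univ.filter fun i : Fin n => M i j = true).card := by
    intro j
    by_contra h
    push_neg at h
    set S := (univ.filter fun i : Fin n => M i j = true) with hS
    have hSs : S.card ≤ s := Nat.lt_succ_iff.mp h
    have hcompl : n - s ≤ Sᶜ.card := by
      rw [card_compl, Fintype.card_fin]
      omega
    obtain ⟨F, hFsub, hFcard⟩ := exists_subset_card_eq hcompl
    obtain ⟨i, hiF, hiM⟩ := htol F hFcard j
    have : i ∈ Sᶜ := hFsub hiF
    simp [hS] at this
    simp [this] at hiM
  -- double counting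
  have hsum : ∑ j : Fin k, (univ.filter fun i : Fin n => M i j = true).card = w * n := by
    calc ∑ j : Fin k, (univ.filter fun i : Fin n => M i j = true).card
        = ∑ j : Fin k, ∑ i : Fin n, (if M i j = true then 1 else 0) := by
          refine Finset.sum_congr rfl fun j _ => ?_
          rw [Finset.card_filter]
      _ = ∑ i : Fin n, ∑ j : Fin k, (if M i j = true then 1 else 0) := Finset.sum_comm
      _ = ∑ i : Fin n, w := by
          refine Finset.sum_congr rfl fun i _ => ?_
          rw [← Finset.card_filter]
          exact hrow i
      _ = w * n := by simp [mul_comm]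
  have hk1 : k * (s + 1) ≤ w * n := by
    calc k * (s + 1) = ∑ _j : Fin k, (s + 1) := by simp [mul_comm]
      _ ≤ ∑ j : Fin k, (univ.filter fun i : Fin n => M i j = true).card :=
          Finset.sum_le_sum fun j _ => hcol j
      _ = w * n := hsum
  have : s + 1 ≤ w * n / k := (Nat.le_div_iff_mul_le hk).mpr (by linarith [hk1])
  omega
end
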